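/- Let n = 2m. For every admissible set S, the partial derivative of IMM_{n,n} with respect to the m variables of S is a single multilinear monomial m_S of degree m (with coefficient 1) containing exactly one variable from each of the even-indexed matrices X^{(2)}, X^{(4)}, …, X^{(2m)}. Moreover, the map S ↦ m_S is injective on admissible sets, and the number of admissible sets equals n^{2m−1} = n^{n−1}. -/

import Mathlib

open MvPolynomial

noncomputable section

/-- The iterated matrix multiplication polynomial `IMM_{n,n}`: the `(1,1)` entry
(`0`-based indices) of the product of `n` generic `n × n` matrices; the variable
`(k, i, j) : Fin n × Fin n × Fin n` is the `(i,j)` entry of the `(k+1)`-st matrix. -/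
def IMM (n : ℕ) (K : Type*) [CommSemiring K] : MvPolynomial (Fin n × Fin n × Fin n) K :=
  if h : 0 < n then
    (((List.finRange n).map fun k =>
      Matrix.of fun i j => (X (k, i, j) : MvPolynomial (Fin n × Fin n × Fin n) K)).prod)
      ⟨0, h⟩ ⟨0, h⟩
  else 0

/-- Iterated partial derivative with respect to a finite set of variables. -/
def pderivFinset {σ : Type*} {K : Type*} [CommSemiring K] (D : Finset σ)
    (f : MvPolynomial σ K) : MvPolynomial σ K :=
  D.toList.foldr (fun v g => pderiv v g) f

/-- A set `S` of variables of `IMM_{n,n}` is admissible if it consists of exactly one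
variable from the first row of the first matrix and exactly one variable from each of
the other odd-indexed (`1`-based) matrices `X^(3), X^(5), …`; in `0`-based indexing these
are the matrices with even index `k`. -/
def IsAdmissible (n : ℕ) (S : Finset (Fin n × Fin n × Fin n)) : Prop :=
  (∀ v ∈ S, Even v.1.val) ∧
  (∀ k : Fin n, Even k.val → (S.filter fun v => v.1 = k).card = 1) ∧
  (∀ v ∈ S, v.1.val = 0 → v.2.1.val = 0)

open Finset

/-!
Expanding the matrix product, `IMM_{n,n}` is the sum, over all closed paths `q 0, …, q n` in
`Fin n` with `q 0 = q n = 0`, of the squarefree monomial of the edges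
`x^{(k)}_{q(k-1) q(k)}`. Differentiating such a monomial by a set of variables kills it unless
the set consists of some of its edges, which are then removed. Every vertex strictly between the
endpoints lies on two consecutive layers, one even and one odd (layers counted from `0`), so a
closed path is determined by its edges on either class of layers. For even `n`, the admissible
sets are exactly the sets of even-layer edges of closed paths; hence the derivative by an
admissible set keeps only the monomial of its path, leaving that path's odd-layer edges, which
again determine the path. Counting closed paths gives `n^(n-1)` admissible sets.
-/

theorem Matrix.list_ofFn_prod_apply {R ι : Type*} [CommSemiring R] [Fintype ι] [DecidableEq ι] :
    ∀ {ℓ : ℕ} (M : Fin ℓ → Matrix ι ι R) (i j : ι),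
    (List.ofFn M).prod i j =
      ∑ q : Fin (ℓ + 1) → ι with q 0 = i ∧ q (Fin.last ℓ) = j,
        ∏ k, M k (q k.castSucc) (q k.succ)
  | 0, M, i, j => by
    rw [List.ofFn_zero, List.prod_nil, Matrix.one_apply]
    rcases eq_or_ne i j with rfl | h
    · rw [sum_filter, ← (Equiv.funUnique (Fin 1) ι).symm.sum_comp]
      simp
    · rw [if_neg h, eq_comm]
      refine sum_eq_zero fun q hq => absurd ?_ h
      rw [mem_filter] at hq
      exact hq.2.1.symm.trans hq.2.2
  | ℓ + 1, M, i, j => by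
    rw [List.ofFn_succ, List.prod_cons, Matrix.mul_apply, sum_filter,
      ← (Fin.consEquiv fun _ => ι).sum_comp, Fintype.sum_prod_type]
    simp_rw [Matrix.list_ofFn_prod_apply, mul_sum, sum_filter]
    rw [sum_comm]
    simp only [Fin.consEquiv_apply, Fin.cons_zero, ite_and, sum_ite_eq, mem_univ, if_true,
      Fin.prod_univ_succ]
    rw [Fintype.sum_eq_single i fun a ha => by simp [ha]]
    simp [← Fin.succ_last]

section Derivatives

variable {σ R : Type*} [CommSemiring R]

theorem MvPolynomial.pderiv_prod_X [DecidableEq σ] (a : σ) (U : Finset σ) :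
    pderiv a (∏ v ∈ U, (X v : MvPolynomial σ R)) =
      if a ∈ U then ∏ v ∈ U.erase a, X v else 0 := by
  induction U using Finset.induction with
  | empty => simp
  | insert b U hb ih =>
    rw [prod_insert hb, Derivation.leibniz, ih, smul_eq_mul, smul_eq_mul]
    rcases eq_or_ne a b with rfl | hab
    · simp [hb]
    · rw [pderiv_X_of_ne hab.symm, mul_zero, add_zero, erase_insert_of_ne hab.symm,
        prod_insert (by simp [hb])]
      simp [hab, mul_ite]

theorem MvPolynomial.prod_X_injective [Nontrivial R] :
    Function.Injective fun U : Finset σ => ∏ v ∈ U, (X v : MvPolynomial σ R) := by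
  classical
  intro U V h
  have mem_iff (W : Finset σ) (a : σ) :
      a ∈ W ↔ pderiv a (∏ v ∈ W, (X v : MvPolynomial σ R)) ≠ 0 := by
    rw [pderiv_prod_X]
    split_ifs with ha
    · exact iff_of_true ha (isRegular_prod_X _).ne_zero
    · exact iff_of_false ha (not_not.mpr rfl)
  ext a
  rw [mem_iff, mem_iff, show (∏ v ∈ U, (X v : MvPolynomial σ R)) = ∏ v ∈ V, X v from h]

theorem pderivFinset_sum {ι : Type*} (S : Finset σ) (s : Finset ι)
    (f : ι → MvPolynomial σ R) :
    pderivFinset S (∑ i ∈ s, f i) = ∑ i ∈ s, pderivFinset S (f i) := by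
  unfold pderivFinset
  induction S.toList with
  | nil => rfl
  | cons a l ih => rw [List.foldr_cons, ih, map_sum]; rfl

theorem foldr_pderiv_prod_X [DecidableEq σ] {l : List σ} (hl : l.Nodup) (T : Finset σ) :
    l.foldr (fun v g => pderiv v g) (∏ v ∈ T, (X v : MvPolynomial σ R)) =
      if l.toFinset ⊆ T then ∏ v ∈ T \ l.toFinset, X v else 0 := by
  induction l with
  | nil => simp
  | cons a l ih =>
    obtain ⟨hal, hl⟩ := List.nodup_cons.mp hl
    rw [List.foldr_cons, ih hl, List.toFinset_cons, sdiff_insert]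
    by_cases hlT : l.toFinset ⊆ T
    · rw [if_pos hlT, pderiv_prod_X]
      simp [hal, hlT, insert_subset_iff]
    · simp [hlT, insert_subset_iff]

theorem pderivFinset_prod_X [DecidableEq σ] (S T : Finset σ) :
    pderivFinset S (∏ v ∈ T, (X v : MvPolynomial σ R)) =
      if S ⊆ T then ∏ v ∈ T \ S, X v else 0 := by
  rw [pderivFinset, foldr_pderiv_prod_X S.nodup_toList, toList_toFinset]

end Derivatives

section Paths

variable {ℓ : ℕ} {ι : Type*}

def pathEdge (q : Fin (ℓ + 1) → ι) (k : Fin ℓ) : Fin ℓ × ι × ι :=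
  (k, q k.castSucc, q k.succ)

theorem pathEdge_injective (q : Fin (ℓ + 1) → ι) : Function.Injective (pathEdge q) :=
  fun _ _ h => congrArg Prod.fst h

variable [DecidableEq ι]

theorem filter_image_pathEdge (q : Fin (ℓ + 1) → ι) {L : Finset (Fin ℓ)}
    {k : Fin ℓ} (hk : k ∈ L) :
    (L.image (pathEdge q)).filter (fun v => v.1 = k) = {pathEdge q k} := by
  ext v
  simp only [mem_filter, mem_image, mem_singleton]
  constructor
  · rintro ⟨⟨k', -, rfl⟩, rfl⟩
    rfl
  · rintro rfl
    exact ⟨⟨k, hk, rfl⟩, rfl⟩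

theorem pathEdge_eq_of_mem_image {q q' : Fin (ℓ + 1) → ι} {L : Finset (Fin ℓ)} {k : Fin ℓ}
    (h : pathEdge q k ∈ L.image (pathEdge q')) : pathEdge q k = pathEdge q' k := by
  obtain ⟨k', -, hk'⟩ := mem_image.mp h
  obtain rfl : k' = k := congrArg Prod.fst hk'
  exact hk'.symm

theorem eq_of_image_pathEdge_subset {q q' : Fin (ℓ + 1) → ι} {L : Finset (Fin ℓ)}
    (hL : ∀ k k' : Fin ℓ, k'.val = k.val + 1 → k ∈ L ∨ k' ∈ L)
    (h0 : q 0 = q' 0) (hlast : q (Fin.last ℓ) = q' (Fin.last ℓ))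
    (h : L.image (pathEdge q) ⊆ univ.image (pathEdge q')) : q = q' := by
  have hedge {k : Fin ℓ} (hk : k ∈ L) : pathEdge q k = pathEdge q' k :=
    pathEdge_eq_of_mem_image (h (mem_image_of_mem _ hk))
  funext ⟨i, hi⟩
  rcases Nat.eq_zero_or_pos i with rfl | hi0
  · exact h0
  rcases eq_or_ne i ℓ with rfl | hiℓ
  · exact hlast
  rcases hL ⟨i - 1, by omega⟩ ⟨i, by omega⟩ (by simp; omega) with hk | hk
  · have := congrArg (fun v => v.2.2) (hedge hk)
    simpa [pathEdge, Nat.sub_add_cancel hi0] using this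
  · exact congrArg (fun v => v.2.1) (hedge hk)

end Paths

section Layers

def evenLayers (n : ℕ) : Finset (Fin n) := {k | Even k.val}

def oddLayers (n : ℕ) : Finset (Fin n) := {k | Odd k.val}

def closedPaths (n : ℕ) [NeZero n] : Finset (Fin (n + 1) → Fin n) :=
  {q | q 0 = 0 ∧ q (Fin.last n) = 0}

variable {n : ℕ}

theorem card_oddLayers {m : ℕ} (hn : n = 2 * m) : #(oddLayers n) = m := by
  subst hn
  refine (card_nbij' (t := univ) (fun k => ⟨k.val / 2, by omega⟩)
    (fun t => ⟨2 * t.val + 1, by omega⟩) (fun _ _ => mem_univ _) ?_ ?_ ?_).trans (card_fin m)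
  · intro t _
    simp [oddLayers]
  · intro k hk
    obtain ⟨j, hj⟩ : Odd k.val := by simpa [oddLayers] using hk
    ext
    simp only
    omega
  · intro t _
    ext
    simp only
    omega

theorem univ_sdiff_evenLayers : univ \ evenLayers n = oddLayers n := by
  ext k
  simp [evenLayers, oddLayers, Nat.not_even_iff_odd]

theorem mem_evenLayers_or_mem_evenLayers {k k' : Fin n} (h : k'.val = k.val + 1) :
    k ∈ evenLayers n ∨ k' ∈ evenLayers n := by
  simp only [evenLayers, mem_filter, mem_univ, true_and, h, Nat.even_add_one]
  exact em _

theorem mem_oddLayers_or_mem_oddLayers {k k' : Fin n} (h : k'.val = k.val + 1) :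
    k ∈ oddLayers n ∨ k' ∈ oddLayers n := by
  simp only [oddLayers, mem_filter, mem_univ, true_and, h, Nat.odd_add_one]
  exact em _

variable [NeZero n]

theorem card_closedPaths : #(closedPaths n) = n ^ (n - 1) := by
  have : closedPaths n = Fintype.piFinset fun i =>
      if i ∈ ({0, Fin.last n} : Finset _) then {0} else univ := by
    ext q
    simp only [closedPaths, mem_filter, mem_univ, true_and, Fintype.mem_piFinset]
    refine ⟨fun ⟨h0, hlast⟩ i => ?_,
      fun h => ⟨by simpa using h 0, by simpa using h (Fin.last n)⟩⟩
    split_ifs with hi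
    · rcases mem_insert.mp hi with rfl | hi
      · simp [h0]
      · simp [mem_singleton.mp hi, hlast]
    · exact mem_univ _
  rw [this, Fintype.card_piFinset]
  simp only [apply_ite card, card_singleton, card_univ, Fintype.card_fin]
  rw [prod_ite, prod_const_one, one_mul, prod_const, filter_notMem_eq_sdiff, card_univ_sdiff,
    card_pair Fin.last_pos'.ne, Fintype.card_fin, Nat.add_sub_add_right n 1 1]

theorem IMM_eq_sum_closedPaths (K : Type*) [CommSemiring K] :
    IMM n K = ∑ q ∈ closedPaths n, ∏ v ∈ univ.image (pathEdge q), X v := by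
  rw [IMM, dif_pos (NeZero.pos n), ← List.ofFn_eq_map, Matrix.list_ofFn_prod_apply]
  refine sum_congr rfl fun q _ => ?_
  rw [prod_image fun k _ k' _ h => pathEdge_injective q h]
  rfl

theorem eq_of_image_pathEdge_subset_of_mem_closedPaths {q q' : Fin (n + 1) → Fin n}
    (hq : q ∈ closedPaths n) (hq' : q' ∈ closedPaths n) {L : Finset (Fin n)}
    (hL : ∀ k k' : Fin n, k'.val = k.val + 1 → k ∈ L ∨ k' ∈ L)
    (h : L.image (pathEdge q) ⊆ univ.image (pathEdge q')) : q = q' := by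
  simp only [closedPaths, mem_filter, mem_univ, true_and] at hq hq'
  exact eq_of_image_pathEdge_subset hL (hq.1.trans hq'.1.symm) (hq.2.trans hq'.2.symm) h

theorem pderivFinset_image_pathEdge_IMM (K : Type*) [CommSemiring K]
    {q : Fin (n + 1) → Fin n} (hq : q ∈ closedPaths n) :
    pderivFinset ((evenLayers n).image (pathEdge q)) (IMM n K) =
      ∏ v ∈ (oddLayers n).image (pathEdge q), X v := by
  simp_rw [IMM_eq_sum_closedPaths, pderivFinset_sum, pderivFinset_prod_X]
  rw [sum_eq_single_of_mem q hq fun q' hq' hne => if_neg fun h => hne ?_,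
    if_pos (image_subset_image (subset_univ _)), ← image_sdiff _ _ (pathEdge_injective q),
    univ_sdiff_evenLayers]
  exact (eq_of_image_pathEdge_subset_of_mem_closedPaths hq hq'
    (fun _ _ => mem_evenLayers_or_mem_evenLayers) h).symm

end Layers

section Admissible

variable {n : ℕ} {S : Finset (Fin n × Fin n × Fin n)}

theorem IsAdmissible.eq_of_fst_eq (hS : IsAdmissible n S) {v w : Fin n × Fin n × Fin n}
    (hv : v ∈ S) (hw : w ∈ S) (h : v.1 = w.1) : v = w :=
  card_le_one.mp (hS.2.1 _ (hS.1 v hv)).le v (mem_filter.mpr ⟨hv, rfl⟩) w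
    (mem_filter.mpr ⟨hw, h.symm⟩)

theorem IsAdmissible.exists_mem_fst_eq (hS : IsAdmissible n S) {k : Fin n} (hk : Even k.val) :
    ∃ v ∈ S, v.1 = k := by
  obtain ⟨v, hv⟩ := card_eq_one.mp (hS.2.1 k hk)
  exact ⟨v, mem_filter.mp (hv ▸ mem_singleton_self v)⟩

theorem isAdmissible_image_pathEdge [NeZero n] {q : Fin (n + 1) → Fin n} (hq : q 0 = 0) :
    IsAdmissible n ((evenLayers n).image (pathEdge q)) := by
  refine ⟨?_, fun k hk => ?_, ?_⟩
  · simp [evenLayers, pathEdge]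
  · rw [filter_image_pathEdge q (by simpa [evenLayers] using hk), card_singleton]
  · simp only [mem_image]
    rintro _ ⟨k, -, rfl⟩ hk
    have hk0 : k.castSucc = 0 := Fin.ext hk
    simp [pathEdge, hk0, hq]

variable [NeZero n]

def admissiblePath (S : Finset (Fin n × Fin n × Fin n)) (i : Fin (n + 1)) : Fin n :=
  if h : ∃ v ∈ S, v.1.castSucc = i then h.choose.2.1
  else if h : ∃ v ∈ S, v.1.succ = i then h.choose.2.2 else 0

theorem pathEdge_admissiblePath (hS : IsAdmissible n S) {v : Fin n × Fin n × Fin n}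
    (hv : v ∈ S) :
    pathEdge (admissiblePath S) v.1 = v := by
  have hleave : ∃ w ∈ S, w.1.castSucc = v.1.castSucc := ⟨v, hv, rfl⟩
  have hno_leave : ¬∃ w ∈ S, w.1.castSucc = v.1.succ := by
    rintro ⟨w, hw, hwv⟩
    have := hS.1 w hw
    have := hS.1 v hv
    have : w.1.val = v.1.val + 1 := congrArg Fin.val hwv
    grind
  have henter : ∃ w ∈ S, w.1.succ = v.1.succ := ⟨v, hv, rfl⟩
  have h1 := hS.eq_of_fst_eq hleave.choose_spec.1 hv
    (Fin.castSucc_injective _ hleave.choose_spec.2)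
  have h2 := hS.eq_of_fst_eq henter.choose_spec.1 hv (Fin.succ_injective _ henter.choose_spec.2)
  simp only [pathEdge, admissiblePath, dif_pos hleave, dif_neg hno_leave, dif_pos henter, h1, h2]

theorem admissiblePath_mem_closedPaths (hn : Even n) (hS : IsAdmissible n S) :
    admissiblePath S ∈ closedPaths n := by
  obtain ⟨v, hv, hv0⟩ := hS.exists_mem_fst_eq (k := 0) .zero
  have hstart : admissiblePath S 0 = 0 := by
    have := congrArg (fun w => w.2.1) (pathEdge_admissiblePath hS hv)
    simp only [pathEdge, hv0] at this
    exact this.trans (Fin.ext (hS.2.2 v hv (by simp [hv0])))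
  have hend : admissiblePath S (Fin.last n) = 0 := by
    rw [admissiblePath, dif_neg, dif_neg]
    · rintro ⟨w, hw, h⟩
      have := hS.1 w hw
      have : w.1.val + 1 = n := congrArg Fin.val h
      grind
    · rintro ⟨w, hw, h⟩
      exact (Fin.castSucc_lt_last w.1).ne h
  simp [closedPaths, hstart, hend]

theorem image_pathEdge_admissiblePath (hS : IsAdmissible n S) :
    (evenLayers n).image (pathEdge (admissiblePath S)) = S := by
  ext v
  constructor
  · rw [mem_image]
    rintro ⟨k, hk, rfl⟩
    obtain ⟨w, hw, rfl⟩ := hS.exists_mem_fst_eq (by simpa [evenLayers] using hk)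
    rwa [pathEdge_admissiblePath hS hw]
  · intro hv
    exact mem_image.mpr
      ⟨v.1, by simpa [evenLayers] using hS.1 v hv, pathEdge_admissiblePath hS hv⟩

theorem setOf_isAdmissible_eq_image (hn : Even n) :
    {S | IsAdmissible n S} =
      ((closedPaths n).image fun q => (evenLayers n).image (pathEdge q) : Finset _) := by
  ext S
  refine ⟨fun hS => ?_, fun hS => ?_⟩
  · exact mem_image.mpr
      ⟨_, admissiblePath_mem_closedPaths hn hS, image_pathEdge_admissiblePath hS⟩
  · obtain ⟨q, hq, rfl⟩ := mem_image.mp hS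
    exact isAdmissible_image_pathEdge (mem_filter.mp hq).2.1

theorem ncard_setOf_isAdmissible (hn : Even n) :
    {S | IsAdmissible n S}.ncard = n ^ (n - 1) := by
  rw [setOf_isAdmissible_eq_image hn, Set.ncard_coe_finset, card_image_of_injOn, card_closedPaths]
  intro q hq q' hq' h
  exact eq_of_image_pathEdge_subset_of_mem_closedPaths hq hq'
    (fun _ _ => mem_evenLayers_or_mem_evenLayers)
    (h.trans_subset (image_subset_image (subset_univ _)))

end Admissible

/-- For `n = 2m`, the derivative of `IMM_{n,n}` with respect to an admissible set `S` is
a single multilinear monomial `m_S` (with coefficient `1`) of degree `m` containing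
exactly one variable from each even-indexed (`1`-based, i.e. odd `0`-based) matrix;
moreover `S ↦ m_S` is injective on admissible sets, and the number of admissible sets is
`n^(2m−1) = n^(n−1)`. -/
theorem pderiv_IMM_admissible
    (m : ℕ) (hm : 0 < m) (K : Type*) [Field K] (n : ℕ) (hn : n = 2 * m) :
    (∀ S : Finset (Fin n × Fin n × Fin n), IsAdmissible n S →
      ∃ V : Finset (Fin n × Fin n × Fin n),
        pderivFinset S (IMM n K) = ∏ v ∈ V, X v ∧ V.card = m ∧
        (∀ k : Fin n, Odd k.val → (V.filter fun v => v.1 = k).card = 1)) ∧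
    (∀ S S' : Finset (Fin n × Fin n × Fin n), IsAdmissible n S → IsAdmissible n S' →
      pderivFinset S (IMM n K) = pderivFinset S' (IMM n K) → S = S') ∧
    {S : Finset (Fin n × Fin n × Fin n) | IsAdmissible n S}.ncard = n ^ (2 * m - 1) := by
  have : NeZero n := ⟨by omega⟩
  have hEven : Even n := ⟨m, by omega⟩
  have hpath {S} (hS : IsAdmissible n S) : admissiblePath S ∈ closedPaths n :=
    admissiblePath_mem_closedPaths hEven hS
  have hderiv {S} (hS : IsAdmissible n S) : pderivFinset S (IMM n K) =
      ∏ v ∈ (oddLayers n).image (pathEdge (admissiblePath S)), X v := by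
    conv_lhs => rw [← image_pathEdge_admissiblePath hS]
    exact pderivFinset_image_pathEdge_IMM K (hpath hS)
  refine ⟨fun S hS => ⟨_, hderiv hS, ?_, fun k hk => ?_⟩, fun S S' hS hS' h => ?_, ?_⟩
  · rw [card_image_of_injective _ (pathEdge_injective _), card_oddLayers hn]
  · rw [filter_image_pathEdge _ (by simpa [oddLayers] using hk), card_singleton]
  · rw [hderiv hS, hderiv hS'] at h
    have hodd := prod_X_injective h
    rw [← image_pathEdge_admissiblePath hS, ← image_pathEdge_admissiblePath hS',
      eq_of_image_pathEdge_subset_of_mem_closedPaths (hpath hS) (hpath hS')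
        (fun _ _ => mem_oddLayers_or_mem_oddLayers)
        (hodd.trans_subset (image_subset_image (subset_univ _)))]
  · rw [ncard_setOf_isAdmissible hEven, hn]
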